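/- arXiv:1502.05440 — 6 statements merged into one kernel-verified Lean document; each statement's English description precedes it below -/
import Mathlib

section
/- For real numbers r > 0 and ε > 0, with a = r + ε, the following exact identity holds: ∫₀^{arcsin(r/a)} ( a cos θ − √(r² − a² sin² θ) )² dθ = r² · arcsin(r/a) + r·√(2rε + ε²) − (π/2) r². -/
/-!
Expanding the square, the integrand is `r² + a² (cos² θ - sin² θ) - 2 a cos θ √(r² - a² sin² θ)`.
With `α = arcsin (r / a)`, the first two terms integrate to `r² α + a² sin α cos α`, and
`a² sin α cos α = r √(a² - r²)`. The substitution `u = a sin θ` turns the last term into twice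
the quarter-disc area `∫₀^r √(r² - u²) du = π r² / 4`.
-/

open Real Set intervalIntegral

theorem integral_sqrt_sq_sub_sq {r : ℝ} (hr : 0 ≤ r) :
    ∫ u in (0 : ℝ)..r, √(r ^ 2 - u ^ 2) = π * r ^ 2 / 4 :=
  calc
    _ = ∫ u in r * sin 0..r * sin (π / 2), √(r ^ 2 - u ^ 2) := by simp
    _ = ∫ t in (0 : ℝ)..π / 2, √(r ^ 2 - (r * sin t) ^ 2) * (r * cos t) :=
          (integral_comp_mul_deriv (fun t _ => (hasDerivAt_sin t).const_mul r)
            (by fun_prop) (by fun_prop)).symm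
    _ = ∫ t in (0 : ℝ)..π / 2, r ^ 2 * cos t ^ 2 := by
          refine integral_congr fun t ht => ?_
          rw [uIcc_of_le pi_div_two_pos.le] at ht
          have hcos : 0 ≤ r * cos t :=
            mul_nonneg hr (cos_nonneg_of_mem_Icc ⟨by linarith [ht.1, pi_pos], ht.2⟩)
          have hsq : r ^ 2 - (r * sin t) ^ 2 = (r * cos t) ^ 2 := by
            linear_combination -r ^ 2 * sin_sq_add_cos_sq t
          simp only [hsq, sqrt_sq hcos]
          ring
    _ = π * r ^ 2 / 4 := by
          rw [integral_const_mul, integral_cos_sq]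
          simp only [cos_pi_div_two, sin_pi_div_two, cos_zero, sin_zero, mul_zero, sub_zero]
          ring

theorem sq_mul_sin_le_sq_of_mem_Icc_arcsin {r a θ : ℝ} (hr : 0 ≤ r) (ha : 0 < a) (hra : r ≤ a)
    (hθ : θ ∈ Icc 0 (arcsin (r / a))) : (a * sin θ) ^ 2 ≤ r ^ 2 := by
  have hθ' : θ ∈ Icc (-(π / 2)) (π / 2) :=
    ⟨by linarith [hθ.1, pi_pos], hθ.2.trans (arcsin_le_pi_div_two _)⟩
  have hsin : sin θ ≤ r / a :=
    (le_arcsin_iff_sin_le hθ' ⟨by linarith [div_nonneg hr ha.le], (div_le_one ha).2 hra⟩).1 hθ.2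
  have hsin0 : 0 ≤ sin θ := sin_nonneg_of_nonneg_of_le_pi hθ.1 (by linarith [hθ'.2, pi_pos])
  have hmul : a * sin θ ≤ r := by rwa [le_div_iff₀' ha] at hsin
  exact pow_le_pow_left₀ (mul_nonneg ha.le hsin0) hmul 2

theorem integral_sqrt_sq_sub_sq_mul_sin_mul_cos {r a : ℝ} (hr : 0 ≤ r) (ha : 0 < a) (hra : r ≤ a) :
    ∫ θ in (0 : ℝ)..arcsin (r / a), √(r ^ 2 - (a * sin θ) ^ 2) * (a * cos θ) = π * r ^ 2 / 4 := by
  have hsin : a * sin (arcsin (r / a)) = r := by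
    rw [sin_arcsin (by linarith [div_nonneg hr ha.le]) ((div_le_one ha).2 hra)]
    field_simp
  calc
    _ = ∫ u in a * sin 0..a * sin (arcsin (r / a)), √(r ^ 2 - u ^ 2) :=
          integral_comp_mul_deriv (f := fun t => a * sin t)
            (fun t _ => (hasDerivAt_sin t).const_mul a) (by fun_prop) (by fun_prop)
    _ = π * r ^ 2 / 4 := by
          rw [sin_zero, mul_zero, hsin]
          exact integral_sqrt_sq_sub_sq hr

theorem sq_mul_sin_arcsin_mul_cos_arcsin {r a : ℝ} (ha : 0 < a) (hra : |r| ≤ a) :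
    a ^ 2 * (sin (arcsin (r / a)) * cos (arcsin (r / a))) = r * √(a ^ 2 - r ^ 2) := by
  have hlow : -1 ≤ r / a := by rw [le_div_iff₀ ha]; linarith [neg_abs_le r]
  have hupp : r / a ≤ 1 := by rw [div_le_iff₀ ha]; linarith [le_abs_self r]
  rw [sin_arcsin hlow hupp, cos_arcsin]
  have : a ^ 2 - r ^ 2 = a ^ 2 * (1 - (r / a) ^ 2) := by field_simp
  rw [this, sqrt_mul (sq_nonneg a), sqrt_sq ha.le]
  field_simp

theorem integral_shadow_cone_sq_of_le {r a : ℝ} (hr : 0 ≤ r) (ha : 0 < a) (hra : r ≤ a) :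
    ∫ θ in (0 : ℝ)..arcsin (r / a), (a * cos θ - √(r ^ 2 - a ^ 2 * sin θ ^ 2)) ^ 2
      = r ^ 2 * arcsin (r / a) + r * √(a ^ 2 - r ^ 2) - π / 2 * r ^ 2 := by
  have expand : EqOn (fun θ => (a * cos θ - √(r ^ 2 - a ^ 2 * sin θ ^ 2)) ^ 2)
      (fun θ => (r ^ 2 + a ^ 2 * (cos θ ^ 2 - sin θ ^ 2))
        - 2 * (√(r ^ 2 - (a * sin θ) ^ 2) * (a * cos θ)))
      (uIcc 0 (arcsin (r / a))) := by
    intro θ hθ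
    dsimp only
    rw [uIcc_of_le (arcsin_nonneg.2 (div_nonneg hr ha.le))] at hθ
    have hsq := sq_mul_sin_le_sq_of_mem_Icc_arcsin hr ha hra hθ
    rw [mul_pow] at hsq
    rw [sub_sq, sq_sqrt (sub_nonneg.2 hsq), mul_pow a (sin θ)]
    ring
  have hint {f : ℝ → ℝ} (hf : Continuous f) : IntervalIntegrable f MeasureTheory.volume 0
      (arcsin (r / a)) := hf.intervalIntegrable _ _
  rw [integral_congr expand, integral_sub (hint (by fun_prop)) (hint (by fun_prop)),
    integral_add (hint (by fun_prop)) (hint (by fun_prop)), integral_const, integral_const_mul,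
    integral_cos_sq_sub_sin_sq, integral_const_mul,
    integral_sqrt_sq_sub_sq_mul_sin_mul_cos hr ha hra]
  simp only [sin_zero, zero_mul, sub_zero, smul_eq_mul]
  rw [sq_mul_sin_arcsin_mul_cos_arcsin ha (by rwa [abs_of_nonneg hr])]
  ring

/-- The cone-like shadow region contribution to the connectivity mass near a small
circular obstacle: for a node at distance `ε` from an obstacle of radius `r`
(so `a = r + ε` from its centre),
`∫₀^{arcsin(r/a)} (a cos θ − √(r² − a² sin² θ))² dθ
  = r²·arcsin(r/a) + r·√(2rε + ε²) − (π/2) r²`. -/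
theorem integral_shadow_cone_sq (r ε a : ℝ) (hr : 0 < r) (hε : 0 < ε) (ha : a = r + ε) :
    ∫ θ in (0 : ℝ)..(Real.arcsin (r / a)),
        (a * Real.cos θ - Real.sqrt (r ^ 2 - a ^ 2 * Real.sin θ ^ 2)) ^ 2
      = r ^ 2 * Real.arcsin (r / a) + r * Real.sqrt (2 * r * ε + ε ^ 2) - π / 2 * r ^ 2 := by
  have hgap : a ^ 2 - r ^ 2 = 2 * r * ε + ε ^ 2 := by rw [ha]; ring
  rw [integral_shadow_cone_sq_of_le hr.le (by linarith) (by linarith), hgap]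
end

section
/- Fix β > 0, r > 0 and ε > 0, and write a = r + ε and θ_c = arcsin(r/a). Then ∫_{−(π−θ_c)}^{π−θ_c} ∫₀^∞ e^{−β s²} s ds dθ + 2 ∫₀^{θ_c} ∫₀^{a cos θ − √(r² − a² sin² θ)} s ds dθ = π/β + (r² − 1/β)·arcsin(r/a) + r·√(2rε + ε²) − (π/2) r². -/
/-!
The unobscured part is the radial Gaussian integral `∫₀^∞ s e^{-βs²} ds = 1/(2β)` times the
angle `2(π - θ_c)`. In the shadow the inner integral is `ρ(θ)²/2` with
`ρ(θ) = a cos θ - √(r² - a² sin² θ)`; expanding the square gives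
`a² cos 2θ / 2 + r² / 2 - a cos θ √(r² - (a sin θ)²)`, and the last term integrates, through
`u = a sin θ`, against the classical primitive `(u √(r² - u²) + r² arcsin (u/r)) / 2` of
`√(r² - u²)`. At `θ_c` one has `a sin θ_c = r`, so that primitive contributes the quarter disc
`π r² / 4`.
-/

open Real MeasureTheory

theorem integral_Ioi_exp_neg_mul_sq_mul {β : ℝ} (hβ : 0 < β) :
    ∫ s in Set.Ioi (0 : ℝ), exp (-β * s ^ 2) * s = 1 / (2 * β) := by
  have h := integral_mul_cexp_neg_mul_sq (b := (β : ℂ)) (by simpa using hβ)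
  have hcast : ∀ s : ℝ, (s : ℂ) * Complex.exp (-(β : ℂ) * (s : ℂ) ^ 2)
      = ((exp (-β * s ^ 2) * s : ℝ) : ℂ) := fun s => by push_cast; ring
  simp_rw [hcast, integral_complex_ofReal] at h
  rw [one_div]
  exact_mod_cast h

noncomputable def primitiveSqrtSubSq (r u : ℝ) : ℝ :=
  (u * √(r ^ 2 - u ^ 2) + r ^ 2 * arcsin (u / r)) / 2

theorem hasDerivAt_primitiveSqrtSubSq {r u : ℝ} (hr : 0 < r) (hu : |u| < r) :
    HasDerivAt (primitiveSqrtSubSq r) √(r ^ 2 - u ^ 2) u := by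
  obtain ⟨hu₁, hu₂⟩ := abs_lt.1 hu
  have hpos : 0 < r ^ 2 - u ^ 2 := by nlinarith
  have hsqrt := ((hasDerivAt_pow 2 u).const_sub (r ^ 2)).sqrt hpos.ne'
  have harcsin := (hasDerivAt_arcsin (x := u / r) (by rw [ne_eq, div_eq_iff hr.ne']; linarith)
    (by rw [ne_eq, div_eq_iff hr.ne']; linarith)).comp u ((hasDerivAt_id u).div_const r)
  refine (((hasDerivAt_id u).mul hsqrt).add (harcsin.const_mul (r ^ 2))).div_const 2
    |>.congr_deriv ?_
  have hroot : √(1 - (u / r) ^ 2) = √(r ^ 2 - u ^ 2) / r := by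
    rw [show 1 - (u / r) ^ 2 = (r ^ 2 - u ^ 2) / r ^ 2 by field_simp, sqrt_div hpos.le,
      sqrt_sq hr.le]
  have hsq := sq_sqrt hpos.le
  have hroot_pos : 0 < √(r ^ 2 - u ^ 2) := sqrt_pos.2 hpos
  simp only [hroot, id_eq]
  field_simp
  linear_combination (-2) * hsq

theorem hasDerivAt_shadowPrimitive {a r θ : ℝ} (hr : 0 < r) (hθ : |a * sin θ| < r) :
    HasDerivAt
      (fun θ => a ^ 2 * sin (2 * θ) / 4 + r ^ 2 * θ / 2 - primitiveSqrtSubSq r (a * sin θ))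
      ((a * cos θ - √(r ^ 2 - a ^ 2 * sin θ ^ 2)) ^ 2 / 2) θ := by
  have hsin2 := ((hasDerivAt_id θ).const_mul 2).sin.const_mul (a ^ 2) |>.div_const 4
  have hlin := ((hasDerivAt_id θ).const_mul (r ^ 2)).div_const 2
  have hsegment := (hasDerivAt_primitiveSqrtSubSq hr hθ).comp θ ((hasDerivAt_sin θ).const_mul a)
  refine ((hsin2.add hlin).sub hsegment).congr_deriv ?_
  have hsq : √(r ^ 2 - a ^ 2 * sin θ ^ 2) ^ 2 = r ^ 2 - a ^ 2 * sin θ ^ 2 :=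
    sq_sqrt (by nlinarith [abs_lt.1 hθ])
  simp only [id_eq, mul_one, mul_pow, cos_two_mul]
  linear_combination (-1 / 2) * hsq + (a ^ 2 / 2) * sin_sq_add_cos_sq θ

theorem integral_shadowArea {a r : ℝ} (hr : 0 < r) (hra : r < a) :
    ∫ θ in (0 : ℝ)..arcsin (r / a), (a * cos θ - √(r ^ 2 - a ^ 2 * sin θ ^ 2)) ^ 2 / 2
      = (r * √(a ^ 2 - r ^ 2) + r ^ 2 * arcsin (r / a) - π / 2 * r ^ 2) / 2 := by
  have ha : 0 < a := hr.trans hra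
  have hra₁ : r / a < 1 := (div_lt_one ha).2 hra
  have hθc : 0 < arcsin (r / a) := arcsin_pos.2 (div_pos hr ha)
  have hsin : sin (arcsin (r / a)) = r / a := sin_arcsin (by linarith [div_pos hr ha]) hra₁.le
  have hcos : cos (arcsin (r / a)) = √(a ^ 2 - r ^ 2) / a := by
    rw [cos_arcsin, show 1 - (r / a) ^ 2 = (a ^ 2 - r ^ 2) / a ^ 2 by field_simp,
      sqrt_div (by nlinarith), sqrt_sq ha.le]
  have hinside : ∀ θ ∈ Set.Ioo 0 (arcsin (r / a)), |a * sin θ| < r := by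
    rintro θ ⟨hθ₀, hθ₁⟩
    have hlt : sin θ < r / a := hsin ▸ sin_lt_sin_of_lt_of_le_pi_div_two
      (by linarith [pi_pos]) (arcsin_le_pi_div_two _) hθ₁
    have hpos : 0 < sin θ :=
      sin_pos_of_pos_of_lt_pi hθ₀ (by linarith [arcsin_le_pi_div_two (r / a), pi_pos])
    rw [abs_of_pos (by positivity)]
    rwa [lt_div_iff₀' ha] at hlt
  rw [intervalIntegral.integral_eq_sub_of_hasDerivAt_of_le hθc.le
    (by unfold primitiveSqrtSubSq; fun_prop)
    (fun θ hθ => hasDerivAt_shadowPrimitive hr (hinside θ hθ))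
    (Continuous.intervalIntegrable (by fun_prop) _ _)]
  have hr_sin : a * (r / a) = r := mul_div_cancel₀ r ha.ne'
  simp only [primitiveSqrtSubSq, sin_two_mul, hsin, hcos, hr_sin, sub_self, sqrt_zero,
    div_self hr.ne', arcsin_one, sin_zero, mul_zero, zero_div, arcsin_zero]
  field_simp
  ring

/-- The approximated connectivity mass (Eq. 17 of the paper) of a node at distance `ε`
from a circular obstacle of radius `r` (so at distance `a = r + ε` from its centre),
with Rayleigh connection function `e^{−β s²}`:
polar integral over unobscured angles plus twice the cone-like shadow region equals
`π/β + (r² − 1/β)·arcsin(r/a) + r·√(2rε + ε²) − (π/2) r²`. -/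
theorem connectivity_mass_small_obstacle (β r ε a θc : ℝ)
    (hβ : 0 < β) (hr : 0 < r) (hε : 0 < ε) (ha : a = r + ε)
    (hθc : θc = Real.arcsin (r / a)) :
    (∫ θ in (-(π - θc))..(π - θc),
        ∫ s in Set.Ioi (0 : ℝ), Real.exp (-β * s ^ 2) * s)
      + 2 * ∫ θ in (0 : ℝ)..θc,
          ∫ s in (0 : ℝ)..(a * Real.cos θ - Real.sqrt (r ^ 2 - a ^ 2 * Real.sin θ ^ 2)), s
      = π / β + (r ^ 2 - 1 / β) * Real.arcsin (r / a)
        + r * Real.sqrt (2 * r * ε + ε ^ 2) - π / 2 * r ^ 2 := by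
  have hgap : a ^ 2 - r ^ 2 = 2 * r * ε + ε ^ 2 := by rw [ha]; ring
  simp only [integral_Ioi_exp_neg_mul_sq_mul hβ, intervalIntegral.integral_const, smul_eq_mul,
    integral_id, zero_pow two_ne_zero, sub_zero]
  rw [hθc, integral_shadowArea hr (by linarith), hgap]
  field_simp
  ring
end

section
/- Fix β > 0. Then, as R → ∞, 2∫₀^R e^{−β x²} √(R² − x²) dx = √(π/β)·R − (√π/(4 β^{3/2}))·R^{−1} + O(R^{−2}); i.e. there exist R₀ > 0 and C > 0 such that |2∫₀^R e^{−βx²}√(R²−x²)dx − √(π/β) R + √π/(4β^{3/2} R)| ≤ C/R² for all R ≥ R₀. -/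
open Real MeasureTheory Set

/-!
On `[0, R]` one has `R - x²/(2R) - x⁴/(2R³) ≤ √(R² - x²) ≤ R - x²/(2R)`, so against the
Gaussian weight the integral is `R·∫₀^R e^{-βx²} - (2R)⁻¹·∫₀^R x²e^{-βx²} + O(R⁻³)`.
Completing the two truncated integrals to the Gaussian moments `√(π/β)/2` and
`Γ(3/2)/(2β^{3/2}) = √π/(4β^{3/2})` costs their tails beyond `R`, and the Markov-type bound
`∫_R^∞ f ≤ R⁻ᵐ ∫_0^∞ xᵐ f` with the third moment makes both tail contributions `O(R⁻²)`.
-/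

lemma abs_sqrt_sq_sub_sq_sub_le {R x : ℝ} (hR : 0 < R) (hx : x ^ 2 ≤ R ^ 2) :
    |√(R ^ 2 - x ^ 2) - (R - x ^ 2 / (2 * R))| ≤ x ^ 4 / (2 * R ^ 3) := by
  set s := √(R ^ 2 - x ^ 2)
  have hs_sq : s ^ 2 = R ^ 2 - x ^ 2 := sq_sqrt (by linarith)
  have hs0 : 0 ≤ s := sqrt_nonneg _
  have hsR : s ≤ R := by nlinarith
  -- With `s² = R² - x²` the second-order Taylor remainder is a perfect square.
  have hgap : R - x ^ 2 / (2 * R) - s = (R - s) ^ 2 / (2 * R) := by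
    field_simp
    linear_combination -hs_sq
  have hRs : (R - s) * R ≤ x ^ 2 := by nlinarith
  rw [abs_sub_comm, abs_of_nonneg (hgap ▸ by positivity), hgap,
    div_le_div_iff₀ (by positivity) (by positivity)]
  have := pow_le_pow_left₀ (by nlinarith) hRs 2
  nlinarith

lemma abs_integral_mul_sqrt_sub_le {w : ℝ → ℝ} (hw : Continuous w) {R : ℝ} (hR : 0 < R)
    (hw0 : ∀ x ∈ Icc 0 R, 0 ≤ w x) :
    |(∫ x in (0 : ℝ)..R, w x * √(R ^ 2 - x ^ 2))
        - (R * (∫ x in (0 : ℝ)..R, w x) - (∫ x in (0 : ℝ)..R, x ^ 2 * w x) / (2 * R))|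
      ≤ (∫ x in (0 : ℝ)..R, x ^ 4 * w x) / (2 * R ^ 3) := by
  have hint (f : ℝ → ℝ) (hf : Continuous f) : IntervalIntegrable f volume 0 R :=
    hf.intervalIntegrable 0 R
  have hquad : R * (∫ x in (0 : ℝ)..R, w x) - (∫ x in (0 : ℝ)..R, x ^ 2 * w x) / (2 * R)
      = ∫ x in (0 : ℝ)..R, w x * (R - x ^ 2 / (2 * R)) := by
    rw [← intervalIntegral.integral_const_mul, ← intervalIntegral.integral_div,
      ← intervalIntegral.integral_sub (hint _ (by fun_prop)) (hint _ (by fun_prop))]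
    congr 1 with x
    ring
  rw [hquad, ← intervalIntegral.integral_sub (hint _ (by fun_prop)) (hint _ (by fun_prop)),
    ← intervalIntegral.integral_div]
  refine (intervalIntegral.abs_integral_le_integral_abs hR.le).trans
    (intervalIntegral.integral_mono_on hR.le (hint _ (by fun_prop)) (hint _ (by fun_prop))
      fun x hx => ?_)
  rw [← mul_sub, abs_mul, abs_of_nonneg (hw0 x hx), mul_comm (x ^ 4), mul_div_assoc]
  exact mul_le_mul_of_nonneg_left
    (abs_sqrt_sq_sub_sq_sub_le hR (pow_le_pow_left₀ hx.1 hx.2 2)) (hw0 x hx)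

lemma setIntegral_Ioi_le_div_pow {f : ℝ → ℝ} {R : ℝ} (m : ℕ) (hR : 0 < R)
    (hf0 : ∀ x ∈ Ioi 0, 0 ≤ f x) (hf : IntegrableOn f (Ioi R))
    (hfm : IntegrableOn (fun x => x ^ m * f x) (Ioi 0)) :
    ∫ x in Ioi R, f x ≤ (∫ x in Ioi 0, x ^ m * f x) / R ^ m := by
  have hRm : 0 < R ^ m := by positivity
  calc ∫ x in Ioi R, f x ≤ ∫ x in Ioi R, x ^ m * f x / R ^ m := by
        refine setIntegral_mono_on hf ((hfm.mono_set (Ioi_subset_Ioi hR.le)).div_const _)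
          measurableSet_Ioi fun x hx => ?_
        have hx : R < x := hx
        rw [le_div_iff₀ hRm, mul_comm]
        exact mul_le_mul_of_nonneg_right (pow_le_pow_left₀ hR.le hx.le m)
          (hf0 x (hR.trans hx))
    _ = (∫ x in Ioi R, x ^ m * f x) / R ^ m := integral_div _ _
    _ ≤ (∫ x in Ioi 0, x ^ m * f x) / R ^ m := by
        refine div_le_div_of_nonneg_right (setIntegral_mono_set hfm ?_ ?_) hRm.le
        · filter_upwards [self_mem_ae_restrict measurableSet_Ioi] with x hx
          exact mul_nonneg (pow_nonneg (le_of_lt hx) m) (hf0 x hx)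
        · exact (Ioi_subset_Ioi hR.le).eventuallyLE

noncomputable def gaussianMoment (β : ℝ) (n : ℕ) : ℝ :=
  ∫ x in Ioi 0, x ^ n * exp (-β * x ^ 2)

noncomputable def gaussianTail (β : ℝ) (n : ℕ) (R : ℝ) : ℝ :=
  ∫ x in Ioi R, x ^ n * exp (-β * x ^ 2)

lemma gaussianMoment_zero (β : ℝ) : gaussianMoment β 0 = √(π / β) / 2 := by
  simp only [gaussianMoment, pow_zero, one_mul, integral_gaussian_Ioi]

lemma gaussianTail_nonneg (β : ℝ) {R : ℝ} (hR : 0 ≤ R) (n : ℕ) : 0 ≤ gaussianTail β n R :=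
  setIntegral_nonneg measurableSet_Ioi fun x (hx : R < x) => by
    have := hR.trans hx.le
    positivity

section GaussianMoment

variable {β : ℝ} (hβ : 0 < β)
include hβ

lemma integrableOn_pow_mul_exp_neg_mul_sq (n : ℕ) :
    IntegrableOn (fun x : ℝ => x ^ n * exp (-β * x ^ 2)) (Ioi 0) := by
  simpa only [rpow_natCast] using
    integrableOn_rpow_mul_exp_neg_mul_sq hβ (s := n) (by linarith [n.cast_nonneg (α := ℝ)])

lemma gaussianMoment_eq_Gamma (n : ℕ) :
    gaussianMoment β n = β ^ (-((n : ℝ) + 1) / 2) * (1 / 2) * Gamma ((n + 1) / 2) := by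
  rw [← integral_rpow_mul_exp_neg_mul_rpow two_pos (by linarith [n.cast_nonneg (α := ℝ)]) hβ]
  simp only [gaussianMoment, rpow_natCast, rpow_two]

lemma gaussianMoment_pos (n : ℕ) : 0 < gaussianMoment β n := by
  rw [gaussianMoment_eq_Gamma hβ]
  have := Gamma_pos_of_pos (s := ((n : ℝ) + 1) / 2) (by positivity)
  positivity

lemma gaussianMoment_two : gaussianMoment β 2 = √π / (4 * β ^ ((3 : ℝ) / 2)) := by
  have hΓ : Gamma (3 / 2) = √π / 2 := by
    rw [show (3 : ℝ) / 2 = 1 / 2 + 1 by norm_num, Gamma_add_one (by norm_num),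
      Gamma_one_half_eq]
    ring
  rw [gaussianMoment_eq_Gamma hβ, show (-((2 : ℕ) + 1) / 2 : ℝ) = -(3 / 2) by norm_num,
    show (((2 : ℕ) : ℝ) + 1) / 2 = 3 / 2 by norm_num, hΓ, rpow_neg hβ.le]
  field_simp
  ring

lemma intervalIntegral_eq_gaussianMoment_sub_gaussianTail {R : ℝ} (hR : 0 ≤ R) (n : ℕ) :
    ∫ x in (0 : ℝ)..R, x ^ n * exp (-β * x ^ 2) = gaussianMoment β n - gaussianTail β n R :=
  (intervalIntegral.integral_Ioi_sub_Ioi (integrableOn_pow_mul_exp_neg_mul_sq hβ n) hR).symm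

lemma gaussianTail_le_gaussianMoment_div_pow {R : ℝ} (hR : 0 < R) (n m : ℕ) :
    gaussianTail β n R ≤ gaussianMoment β (m + n) / R ^ m := by
  have hmn : ∀ x : ℝ, x ^ m * (x ^ n * exp (-β * x ^ 2)) = x ^ (m + n) * exp (-β * x ^ 2) :=
    fun x => by ring
  have := setIntegral_Ioi_le_div_pow m hR (fun x (hx : 0 < x) => by positivity)
    ((integrableOn_pow_mul_exp_neg_mul_sq hβ n).mono_set (Ioi_subset_Ioi hR.le))
    (by simpa only [hmn] using integrableOn_pow_mul_exp_neg_mul_sq hβ (m + n))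
  simpa only [hmn, gaussianMoment, gaussianTail] using this

lemma abs_two_mul_integral_exp_mul_sqrt_sub_le {R : ℝ} (hR : 0 < R) :
    |2 * (∫ x in (0 : ℝ)..R, exp (-β * x ^ 2) * √(R ^ 2 - x ^ 2))
        - √(π / β) * R + √π / (4 * β ^ ((3 : ℝ) / 2) * R)|
      ≤ gaussianMoment β 4 / R ^ 3 + 2 * R * gaussianTail β 0 R + gaussianTail β 2 R / R := by
  have hJ := abs_integral_mul_sqrt_sub_le (w := fun x => exp (-β * x ^ 2)) (by fun_prop) hR
    fun x _ => (exp_pos _).le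
  have hI := intervalIntegral_eq_gaussianMoment_sub_gaussianTail hβ hR.le
  have hI0 := hI 0
  simp only [pow_zero, one_mul, gaussianMoment_zero] at hI0
  rw [hI0, hI 2, hI 4, gaussianMoment_two hβ] at hJ
  have hT4 := gaussianTail_nonneg β hR.le 4
  set J := ∫ x in (0 : ℝ)..R, exp (-β * x ^ 2) * √(R ^ 2 - x ^ 2)
  set A := R * (√(π / β) / 2 - gaussianTail β 0 R)
    - (√π / (4 * β ^ ((3 : ℝ) / 2)) - gaussianTail β 2 R) / (2 * R)
  have hJA : 2 * |J - A| ≤ gaussianMoment β 4 / R ^ 3 :=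
    calc 2 * |J - A| ≤ 2 * ((gaussianMoment β 4 - gaussianTail β 4 R) / (2 * R ^ 3)) := by
          gcongr
      _ ≤ gaussianMoment β 4 / R ^ 3 := by
          rw [← mul_div_assoc, mul_div_mul_left _ _ two_ne_zero]
          gcongr
          linarith
  have hsplit : 2 * J - √(π / β) * R + √π / (4 * β ^ ((3 : ℝ) / 2) * R)
      = 2 * (J - A) - 2 * R * gaussianTail β 0 R + gaussianTail β 2 R / R := by
    simp only [A]
    field_simp
    ring
  have hT0 : 0 ≤ 2 * R * gaussianTail β 0 R := by
    have := gaussianTail_nonneg β hR.le 0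
    positivity
  have hT2 : 0 ≤ gaussianTail β 2 R / R := by
    have := gaussianTail_nonneg β hR.le 2
    positivity
  rw [hsplit, abs_le]
  constructor <;> linarith [neg_abs_le (J - A), le_abs_self (J - A)]

end GaussianMoment

/-- Curvature-corrected boundary integral for the disk: as `R → ∞`,
`2∫₀^R e^{−βx²}√(R²−x²) dx = √(π/β)·R − (√π/(4β^{3/2}))·R⁻¹ + O(R⁻²)`. -/
theorem disk_boundary_integral_expansion (β : ℝ) (hβ : 0 < β) :
    ∃ R₀ > (0 : ℝ), ∃ C > (0 : ℝ), ∀ R : ℝ, R₀ ≤ R →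
      |2 * (∫ x in (0 : ℝ)..R, Real.exp (-β * x ^ 2) * Real.sqrt (R ^ 2 - x ^ 2))
          - Real.sqrt (π / β) * R + Real.sqrt π / (4 * β ^ ((3 : ℝ) / 2) * R)|
        ≤ C / R ^ 2 := by
  have hM3 := gaussianMoment_pos hβ 3
  have hM4 := gaussianMoment_pos hβ 4
  refine ⟨1, one_pos, gaussianMoment β 4 + 3 * gaussianMoment β 3, by positivity,
    fun R hR => ?_⟩
  have hR0 : 0 < R := one_pos.trans_le hR
  have hT0 : R * gaussianTail β 0 R ≤ gaussianMoment β 3 / R ^ 2 :=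
    calc R * gaussianTail β 0 R ≤ R * (gaussianMoment β 3 / R ^ 3) := by
          gcongr
          exact gaussianTail_le_gaussianMoment_div_pow hβ hR0 0 3
      _ = gaussianMoment β 3 / R ^ 2 := by field_simp
  have hT2 : gaussianTail β 2 R / R ≤ gaussianMoment β 3 / R ^ 2 :=
    calc gaussianTail β 2 R / R ≤ gaussianMoment β 3 / R ^ 1 / R := by
          gcongr
          exact gaussianTail_le_gaussianMoment_div_pow hβ hR0 2 1
      _ = gaussianMoment β 3 / R ^ 2 := by field_simp
  have hM4R : gaussianMoment β 4 / R ^ 3 ≤ gaussianMoment β 4 / R ^ 2 :=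
    div_le_div_of_nonneg_left hM4.le (by positivity) (pow_le_pow_right₀ hR (by norm_num))
  calc _ ≤ gaussianMoment β 4 / R ^ 3 + 2 * R * gaussianTail β 0 R + gaussianTail β 2 R / R :=
        abs_two_mul_integral_exp_mul_sqrt_sub_le hβ hR0
    _ ≤ (gaussianMoment β 4 + 3 * gaussianMoment β 3) / R ^ 2 := by
        rw [add_div, mul_div_assoc]
        linarith
end

section
/- Fix β > 0 and r > 0, and define F(ε) = ε² π r² / (3(ε + r)) + (π√π/(β√β))·(1 − (1 − √(1 − (r/(r+ε))²))/2) for ε > 0. Then as ε → 0⁺, F(ε) = π√π/(2β√β) + (π√π/(β√β))·(1/√(2r))·ε^{1/2} + O(ε^{3/2}); i.e. there exist δ > 0 and C > 0 such that |F(ε) − π^{3/2}/(2β^{3/2}) − (π^{3/2}/(β^{3/2}√(2r)))·ε^{1/2}| ≤ C ε^{3/2} for all ε ∈ (0, δ). -/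
/-!
Write `K = π√π/(β√β)`, `s = √(1 - (r/(r+ε))²)` and `t = √(2ε/r)`. After subtracting the claimed
two-term expansion, what remains of `F ε` is the shadow-cone volume `ε²πr²/(3(ε+r)) = O(ε²)` plus
`K/2 · (s - t)`. The radicands differ by `ε²(3r+2ε)/(r(r+ε)²) = O(ε²)`, and dividing by `t ≍ √ε`
gives `|s - t| = O(ε^{3/2})`.
-/

open Real

lemma abs_sqrt_sub_sqrt_le {a b : ℝ} (ha : 0 ≤ a) (hb : 0 < b) :
    |√a - √b| ≤ |a - b| / √b := by
  have hsb : 0 < √b := sqrt_pos.2 hb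
  have hfactor : |a - b| = |√a - √b| * (√a + √b) := by
    rw [← abs_of_nonneg (by positivity : 0 ≤ √a + √b), ← abs_mul]
    congr 1
    nlinarith [sq_sqrt ha, sq_sqrt hb.le]
  rw [le_div_iff₀ hsb, hfactor]
  exact mul_le_mul_of_nonneg_left (le_add_of_nonneg_left (sqrt_nonneg a)) (abs_nonneg _)

section SmallObstacle

variable {r ε : ℝ}

lemma one_sub_div_add_sq_nonneg (hr : 0 < r) (hε : 0 ≤ ε) : 0 ≤ 1 - (r / (r + ε)) ^ 2 :=
  sub_nonneg.2 <| pow_le_one₀ (by positivity) (div_le_one_of_le₀ (by linarith) (by positivity))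

lemma one_sub_div_add_sq_sub (hr : 0 < r) (hε : 0 ≤ ε) :
    1 - (r / (r + ε)) ^ 2 - 2 * ε / r = -(ε ^ 2 * (3 * r + 2 * ε) / (r * (r + ε) ^ 2)) := by
  have : r + ε ≠ 0 := by positivity
  field_simp
  ring

lemma abs_one_sub_div_add_sq_sub_le (hr : 0 < r) (hε : 0 ≤ ε) :
    |1 - (r / (r + ε)) ^ 2 - 2 * ε / r| ≤ 5 * ε ^ 2 / r ^ 2 := by
  rw [one_sub_div_add_sq_sub hr hε, abs_neg, abs_of_nonneg (by positivity),
    div_le_div_iff₀ (by positivity) (by positivity)]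
  nlinarith [mul_nonneg (mul_nonneg (sq_nonneg ε) hr.le)
    (by positivity : (0 : ℝ) ≤ 2 * r ^ 2 + 8 * r * ε + 5 * ε ^ 2)]

lemma abs_sqrt_one_sub_div_add_sq_sub_sqrt_le (hr : 0 < r) (hε : 0 < ε) :
    |√(1 - (r / (r + ε)) ^ 2) - √(2 * ε / r)| ≤ 5 / (r * √r) * (ε * √ε) := by
  have ht : √ε / √r ≤ √(2 * ε / r) := by
    rw [← sqrt_div hε.le]
    exact sqrt_le_sqrt (div_le_div_of_nonneg_right (by linarith) hr.le)
  calc |√(1 - (r / (r + ε)) ^ 2) - √(2 * ε / r)|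
      ≤ |1 - (r / (r + ε)) ^ 2 - 2 * ε / r| / √(2 * ε / r) :=
        abs_sqrt_sub_sqrt_le (one_sub_div_add_sq_nonneg hr hε.le) (by positivity)
    _ ≤ 5 * ε ^ 2 / r ^ 2 / (√ε / √r) :=
        div_le_div₀ (by positivity) (abs_one_sub_div_add_sq_sub_le hr hε.le)
          (by positivity) ht
    _ = 5 / (r * √r) * (ε * √ε) := by
        field_simp
        rw [sq_sqrt hε.le, sq_sqrt hr.le]
        ring

lemma shadow_volume_le (hr : 0 < r) (hε : 0 < ε) (hεr : ε ≤ r) :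
    ε ^ 2 * π * r ^ 2 / (3 * (ε + r)) ≤ π * r * √r / 3 * (ε * √ε) :=
  calc ε ^ 2 * π * r ^ 2 / (3 * (ε + r))
      ≤ ε ^ 2 * π * r ^ 2 / (3 * r) := by gcongr; linarith
    _ = π * r / 3 * (ε * √ε * √ε) := by
        rw [mul_assoc ε, mul_self_sqrt hε.le]
        field_simp
    _ ≤ π * r / 3 * (ε * √ε * √r) := by gcongr
    _ = π * r * √r / 3 * (ε * √ε) := by ring

lemma sqrt_two_mul_div_eq (hr : 0 < r) :
    √(2 * ε / r) = 2 * (1 / √(2 * r) * √ε) := by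
  rw [show 2 * ε / r = 2 ^ 2 * ε / (2 * r) by field_simp, sqrt_div' _ (by positivity),
    sqrt_mul (by positivity), sqrt_sq zero_le_two]
  ring

lemma mass_sub_expansion_eq (K : ℝ) (hr : 0 < r) :
    ε ^ 2 * π * r ^ 2 / (3 * (ε + r)) + K * (1 - (1 - √(1 - (r / (r + ε)) ^ 2)) / 2)
        - K / 2 - K * (1 / √(2 * r)) * √ε
      = ε ^ 2 * π * r ^ 2 / (3 * (ε + r))
        + K / 2 * (√(1 - (r / (r + ε)) ^ 2) - √(2 * ε / r)) := by
  rw [sqrt_two_mul_div_eq hr]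
  ring

end SmallObstacle

theorem mass_small_spherical_obstacle_expansion_general (β r : ℝ) (hr : 0 < r)
    (F : ℝ → ℝ)
    (hF : ∀ ε > (0 : ℝ), F ε = ε ^ 2 * π * r ^ 2 / (3 * (ε + r))
        + π * Real.sqrt π / (β * Real.sqrt β)
          * (1 - (1 - Real.sqrt (1 - (r / (r + ε)) ^ 2)) / 2)) :
    ∃ δ > (0 : ℝ), ∃ C > (0 : ℝ), ∀ ε : ℝ, 0 < ε → ε < δ →
      |F ε - π * Real.sqrt π / (2 * β * Real.sqrt β)
          - π * Real.sqrt π / (β * Real.sqrt β) * (1 / Real.sqrt (2 * r)) * Real.sqrt ε|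
        ≤ C * (ε * Real.sqrt ε) := by
  set K := π * √π / (β * √β)
  have hK : π * √π / (2 * β * √β) = K / 2 := by ring
  refine ⟨r, hr, π * r * √r / 3 + |K| / 2 * (5 / (r * √r)), by positivity, ?_⟩
  intro ε hε hεr
  rw [hF ε hε, hK, mass_sub_expansion_eq K hr]
  calc _ ≤ |ε ^ 2 * π * r ^ 2 / (3 * (ε + r))|
          + |K| / 2 * |√(1 - (r / (r + ε)) ^ 2) - √(2 * ε / r)| :=
        (abs_add_le _ _).trans_eq (by rw [abs_mul, abs_div K, abs_two])
    _ ≤ π * r * √r / 3 * (ε * √ε) + |K| / 2 * (5 / (r * √r) * (ε * √ε)) := by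
        rw [abs_of_nonneg (by positivity)]
        gcongr
        · exact shadow_volume_le hr hε hεr.le
        · exact abs_sqrt_one_sub_div_add_sq_sub_sqrt_le hr hε
    _ = _ := by ring

/-- Expansion of the connectivity mass near a small spherical obstacle: with
`F(ε) = ε²πr²/(3(ε+r)) + (π√π/(β√β))(1 − (1 − √(1 − (r/(r+ε))²))/2)`, as `ε → 0⁺`,
`F(ε) = π√π/(2β√β) + (π√π/(β√β))·(1/√(2r))·ε^{1/2} + O(ε^{3/2})`. -/
theorem mass_small_spherical_obstacle_expansion (β r : ℝ) (hβ : 0 < β) (hr : 0 < r)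
    (F : ℝ → ℝ)
    (hF : ∀ ε > (0 : ℝ), F ε = ε ^ 2 * π * r ^ 2 / (3 * (ε + r))
        + π * Real.sqrt π / (β * Real.sqrt β)
          * (1 - (1 - Real.sqrt (1 - (r / (r + ε)) ^ 2)) / 2)) :
    ∃ δ > (0 : ℝ), ∃ C > (0 : ℝ), ∀ ε : ℝ, 0 < ε → ε < δ →
      |F ε - π * Real.sqrt π / (2 * β * Real.sqrt β)
          - π * Real.sqrt π / (β * Real.sqrt β) * (1 / Real.sqrt (2 * r)) * Real.sqrt ε|
        ≤ C * (ε * Real.sqrt ε) :=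
  mass_small_spherical_obstacle_expansion_general β r hr F hF
end

section
/- Fix β > 0 and r > 0. Then lim_{ρ → ∞} ρ² · 2π ∫₀^∞ (r + ε) · exp( −ρ·(√2/(β√r))·ε^{1/2} ) · ( 1 − ρ·((8βr² − 5)/(6√2 · β · r^{3/2}))·ε^{3/2} ) dε = 2π β² r². -/
/-!
Expanding the integrand in powers of `√ε` reduces the integral to the moments
`∫₀^∞ √ε ^ n e^{-b√ε} dε = 2 (n+1)! / b^{n+2}`, Gamma integrals after `ε = t²`.
With `b = ρa` and `c = ρm` the integral is `2r/(ρa)² + O(ρ⁻⁴)`: the correction term carries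
one factor `ρ` but decays like `ρ⁻⁵`. Hence `ρ²` times it tends to `2r/a² = β²r²`.
-/

open Real MeasureTheory Filter Topology

lemma sqrt_pow_eq_rpow {x : ℝ} (hx : 0 ≤ x) (n : ℕ) : √x ^ n = x ^ ((n : ℝ) / 2) := by
  rw [sqrt_eq_rpow, ← rpow_natCast, ← rpow_mul hx, one_div_mul_eq_div]

lemma integrableOn_sqrt_pow_mul_exp_neg_mul_sqrt (n : ℕ) {b : ℝ} (hb : 0 < b) :
    IntegrableOn (fun x => √x ^ n * exp (-b * √x)) (Set.Ioi 0) := by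
  refine (integrableOn_rpow_mul_exp_neg_mul_rpow (p := 1 / 2) (s := n / 2)
    (neg_one_lt_zero.trans_le (by positivity)) (by norm_num) hb).congr_fun
    (fun x hx => ?_) measurableSet_Ioi
  rw [sqrt_pow_eq_rpow (le_of_lt hx), sqrt_eq_rpow]

lemma integral_sqrt_pow_mul_exp_neg_mul_sqrt (n : ℕ) {b : ℝ} (hb : 0 < b) :
    ∫ x in Set.Ioi 0, √x ^ n * exp (-b * √x) = 2 * (n + 1).factorial / b ^ (n + 2) := by
  rw [setIntegral_congr_fun measurableSet_Ioi
      (fun x hx => by rw [sqrt_pow_eq_rpow (le_of_lt hx), sqrt_eq_rpow]),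
    integral_rpow_mul_exp_neg_mul_rpow (by norm_num)
      (neg_one_lt_zero.trans_le (by positivity)) hb]
  have hexp : ((n : ℝ) / 2 + 1) / (1 / 2) = ((n + 1 : ℕ) : ℝ) + 1 := by push_cast; ring
  rw [neg_div, hexp, Gamma_nat_eq_factorial, rpow_neg hb.le, ← Nat.cast_add_one, rpow_natCast]
  ring

lemma integral_add_mul_exp_neg_mul_sqrt_mul_one_sub (r b c : ℝ) (hb : 0 < b) :
    ∫ ε in Set.Ioi 0, (r + ε) * exp (-b * √ε) * (1 - c * (ε * √ε))
      = 2 * r / b ^ 2 + 12 / b ^ 4 - c * (48 * r / b ^ 5 + 1440 / b ^ 7) := by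
  set f : ℕ → ℝ → ℝ := fun n x => √x ^ n * exp (-b * √x)
  have hf : ∀ n, IntegrableOn (f n) (Set.Ioi 0) :=
    fun n => integrableOn_sqrt_pow_mul_exp_neg_mul_sqrt n hb
  have hexpand : ∀ ε ∈ Set.Ioi (0 : ℝ),
      (r + ε) * exp (-b * √ε) * (1 - c * (ε * √ε))
        = (r * f 0 ε + f 2 ε) - c * (r * f 3 ε + f 5 ε) := by
    intro ε hε
    obtain ⟨s, hs, rfl⟩ : ∃ s, 0 ≤ s ∧ ε = s ^ 2 :=
      ⟨√ε, sqrt_nonneg _, (sq_sqrt hε.le).symm⟩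
    simp only [f, sqrt_sq hs]
    ring
  have hf02 : IntegrableOn (fun x => r * f 0 x + f 2 x) (Set.Ioi 0) :=
    ((hf 0).const_mul r).add (hf 2)
  have hf35 : IntegrableOn (fun x => r * f 3 x + f 5 x) (Set.Ioi 0) :=
    ((hf 3).const_mul r).add (hf 5)
  rw [setIntegral_congr_fun measurableSet_Ioi hexpand, integral_sub hf02 (hf35.const_mul c),
    integral_const_mul, integral_add ((hf 0).const_mul r) (hf 2),
    integral_add ((hf 3).const_mul r) (hf 5), integral_const_mul, integral_const_mul]
  simp only [f, integral_sqrt_pow_mul_exp_neg_mul_sqrt _ hb]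
  norm_num [Nat.factorial]
  ring

/-- Leading order of the small-obstacle term in the annulus: as `ρ → ∞`,
`ρ² · 2π ∫₀^∞ (r+ε) e^{−ρ(√2/(β√r))√ε} (1 − ρ((8βr²−5)/(6√2βr^{3/2}))ε^{3/2}) dε
  → 2πβ²r²`. -/
theorem small_obstacle_term_limit (β r : ℝ) (hβ : 0 < β) (hr : 0 < r) :
    Tendsto
      (fun ρ : ℝ => ρ ^ 2 * (2 * π *
        ∫ ε in Set.Ioi (0 : ℝ),
          (r + ε) * Real.exp (-ρ * (Real.sqrt 2 / (β * Real.sqrt r)) * Real.sqrt ε)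
            * (1 - ρ * ((8 * β * r ^ 2 - 5) / (6 * Real.sqrt 2 * β * (r * Real.sqrt r)))
                * (ε * Real.sqrt ε))))
      atTop (𝓝 (2 * π * β ^ 2 * r ^ 2)) := by
  set a := √2 / (β * √r)
  set m := (8 * β * r ^ 2 - 5) / (6 * √2 * β * (r * √r))
  have ha : 0 < a := by positivity
  have ha2 : a ^ 2 = 2 / (β ^ 2 * r) := by
    rw [div_pow, mul_pow, sq_sqrt zero_le_two, sq_sqrt hr.le]
  set A := 12 / a ^ 4 - 48 * m * r / a ^ 5
  set B := 1440 * m / a ^ 7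
  have hlim : Tendsto (fun ρ : ℝ => 2 * π * (2 * r / a ^ 2 + A * ρ⁻¹ ^ 2 - B * ρ⁻¹ ^ 4))
      atTop (𝓝 (2 * π * β ^ 2 * r ^ 2)) := by
    have h := (((tendsto_inv_atTop_zero.pow 2).const_mul A).sub
      ((tendsto_inv_atTop_zero.pow 4).const_mul B)).const_add (2 * r / a ^ 2) |>.const_mul (2 * π)
    convert h using 2
    · ring
    · rw [ha2]; field_simp; ring
  refine hlim.congr' ?_
  filter_upwards [eventually_gt_atTop 0] with ρ hρ
  have hI := integral_add_mul_exp_neg_mul_sqrt_mul_one_sub r (ρ * a) (ρ * m) (by positivity)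
  rw [← neg_mul] at hI
  rw [hI]
  simp only [A, B]
  field_simp
  ring
end

section
/- Fix β > 0 and r > 0. Then lim_{ρ → ∞} ρ² · 4π ∫₀^∞ (r + ε)² · exp( −ρ·(π√π/(β√β))·(1/√(2r))·ε^{1/2} ) dε = 16 β³ r³ / π², which equals (4/3)π r³ · (12 β³/π³). -/
/-!
Substituting `ε = u²` turns the integral into `∫₀^∞ 2u (r + u²)² e^{-bu} du`, a combination of
Gamma integrals, which gives `2r²/b² + 24r/b⁴ + 240/b⁶` exactly. With `b = ρk`, multiplying by
`ρ²` leaves `2r²/k²` plus terms of order `ρ⁻²`, and `k² = π³/(2rβ³)`.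
-/

open Real MeasureTheory Filter Topology Set

theorem integrableOn_pow_mul_exp_neg_mul_Ioi {b : ℝ} (hb : 0 < b) (n : ℕ) :
    IntegrableOn (fun x : ℝ => x ^ n * exp (-b * x)) (Ioi 0) := by
  simpa only [rpow_natCast, rpow_one] using
    integrableOn_rpow_mul_exp_neg_mul_rpow (s := (n : ℝ)) (p := 1)
      (neg_one_lt_zero.trans_le n.cast_nonneg) one_pos hb

theorem integral_pow_mul_exp_neg_mul_Ioi {b : ℝ} (hb : 0 < b) (n : ℕ) :
    ∫ x in Ioi (0 : ℝ), x ^ n * exp (-b * x) = n.factorial / b ^ (n + 1) := by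
  have h := integral_rpow_mul_exp_neg_mul_Ioi (a := n + 1) (by positivity) hb
  rw [add_sub_cancel_right, Gamma_nat_eq_factorial, ← Nat.cast_succ] at h
  simp only [rpow_natCast, one_div, inv_pow, ← neg_mul] at h
  rw [h, div_eq_inv_mul, mul_comm]

theorem integral_comp_sq_Ioi {E : Type*} [NormedAddCommGroup E] [NormedSpace ℝ E] (g : ℝ → E) :
    ∫ u in Ioi (0 : ℝ), (2 * u) • g (u ^ 2) = ∫ x in Ioi (0 : ℝ), g x := by
  rw [← integral_comp_rpow_Ioi_of_pos (g := g) two_pos]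
  refine setIntegral_congr_fun measurableSet_Ioi fun u _ => ?_
  rw [show (2 : ℝ) - 1 = 1 by norm_num, rpow_one, rpow_two]

theorem integral_add_sq_mul_exp_neg_mul_sqrt_Ioi (r : ℝ) {b : ℝ} (hb : 0 < b) :
    ∫ ε in Ioi (0 : ℝ), (r + ε) ^ 2 * exp (-b * √ε)
      = 2 * r ^ 2 / b ^ 2 + 24 * r / b ^ 4 + 240 / b ^ 6 := by
  rw [← integral_comp_sq_Ioi]
  have h_expand : ∀ u ∈ Ioi (0 : ℝ), (2 * u) • ((r + u ^ 2) ^ 2 * exp (-b * √(u ^ 2)))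
      = 2 * r ^ 2 * (u ^ 1 * exp (-b * u))
        + (4 * r * (u ^ 3 * exp (-b * u)) + 2 * (u ^ 5 * exp (-b * u))) := by
    intro u hu
    rw [sqrt_sq hu.le, smul_eq_mul]
    ring
  have hI := integrableOn_pow_mul_exp_neg_mul_Ioi hb
  have h1 : IntegrableOn (fun u => 2 * r ^ 2 * (u ^ 1 * exp (-b * u))) (Ioi 0) :=
    (hI 1).const_mul _
  have h3 : IntegrableOn (fun u => 4 * r * (u ^ 3 * exp (-b * u))) (Ioi 0) := (hI 3).const_mul _
  have h5 : IntegrableOn (fun u => 2 * (u ^ 5 * exp (-b * u))) (Ioi 0) := (hI 5).const_mul _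
  have h35 : IntegrableOn
      (fun u => 4 * r * (u ^ 3 * exp (-b * u)) + 2 * (u ^ 5 * exp (-b * u))) (Ioi 0) :=
    h3.add h5
  rw [setIntegral_congr_fun measurableSet_Ioi h_expand, integral_add h1 h35,
    integral_add h3 h5,
    integral_const_mul, integral_const_mul, integral_const_mul,
    integral_pow_mul_exp_neg_mul_Ioi hb, integral_pow_mul_exp_neg_mul_Ioi hb,
    integral_pow_mul_exp_neg_mul_Ioi hb]
  norm_num [Nat.factorial]
  ring

/-- Leading order of the small-obstacle term in the spherical shell: as `ρ → ∞`,
`ρ² · 4π ∫₀^∞ (r+ε)² e^{−ρ(π√π/(β√β))(1/√(2r))√ε} dε → 16β³r³/π²`, which equals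
`(4/3)πr³·(12β³/π³)`. -/
theorem small_spherical_obstacle_term_limit (β r : ℝ) (hβ : 0 < β) (hr : 0 < r) :
    Tendsto
      (fun ρ : ℝ => ρ ^ 2 * (4 * π *
        ∫ ε in Set.Ioi (0 : ℝ),
          (r + ε) ^ 2 * Real.exp (-ρ * (π * Real.sqrt π / (β * Real.sqrt β))
            * (1 / Real.sqrt (2 * r)) * Real.sqrt ε)))
      atTop (𝓝 (16 * β ^ 3 * r ^ 3 / π ^ 2))
    ∧ 16 * β ^ 3 * r ^ 3 / π ^ 2 = 4 / 3 * π * r ^ 3 * (12 * β ^ 3 / π ^ 3) := by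
  set k : ℝ := π * √π / (β * √β) * (1 / √(2 * r)) with hk_def
  have hk : 0 < k := by positivity
  have hk_sq : k ^ 2 = π ^ 3 / (2 * r * β ^ 3) := by
    simp only [hk_def, mul_pow, div_pow, one_pow]
    rw [sq_sqrt pi_pos.le, sq_sqrt hβ.le, sq_sqrt (by positivity)]
    ring
  have h_closed : ∀ ρ > 0, ρ ^ 2 * (4 * π *
      ∫ ε in Ioi (0 : ℝ), (r + ε) ^ 2 * exp (-ρ * (π * √π / (β * √β)) * (1 / √(2 * r)) * √ε))
        = 8 * π * r ^ 2 / k ^ 2 + (96 * π * r / k ^ 4 * ρ⁻¹ ^ 2 + 960 * π / k ^ 6 * ρ⁻¹ ^ 4) := by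
    intro ρ hρ
    simp_rw [show ∀ ε, -ρ * (π * √π / (β * √β)) * (1 / √(2 * r)) * √ε = -(ρ * k) * √ε by
      intro ε; rw [hk_def]; ring]
    rw [integral_add_sq_mul_exp_neg_mul_sqrt_Ioi r (mul_pos hρ hk)]
    field_simp
    ring
  have h_lim : 16 * β ^ 3 * r ^ 3 / π ^ 2
      = 8 * π * r ^ 2 / k ^ 2 + (96 * π * r / k ^ 4 * 0 ^ 2 + 960 * π / k ^ 6 * 0 ^ 4) := by
    rw [hk_sq]; field_simp; ring
  refine ⟨?_, by field_simp; ring⟩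
  rw [h_lim]
  refine Tendsto.congr' (EventuallyEq.symm ?_) (tendsto_const_nhds.add
    ((tendsto_const_nhds.mul (tendsto_inv_atTop_zero.pow 2)).add
      (tendsto_const_nhds.mul (tendsto_inv_atTop_zero.pow 4))))
  filter_upwards [eventually_gt_atTop 0] using h_closed
end
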